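/- Let ρ_{AB} be a density matrix on a bipartite Hilbert space A⊗B and U a unitary such that Tr(Uρ_{AB}U† · (|0⟩⟨0|_A ⊗ I_B)) ≥ 1 - ε. Set ρ* = Uρ_{AB}U†, ρ*_B = Tr_A ρ*, and r = rank(ρ_{AB}). Then the trace distance satisfies T(ρ*, |0⟩⟨0|_A ⊗ ρ*_B) ≤ 2√(rε). -/

import Mathlib

/-!
Write `ρ* = Uρ Uᴴ`, `P = |0⟩⟨0| ⊗ 1`, `Q = 1 - P` and `δ = 1 - Tr(ρ* P) ≤ ε`. Since
`|0⟩⟨0| ⊗ ρ*_B = Σₖ Kₖ ρ* Kₖᴴ` with `Kₖ = |0⟩⟨k| ⊗ 1` and `K₀ = P`, the matrix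
`E = |0⟩⟨0| ⊗ ρ*_B - Pρ*P` is positive semidefinite of trace `δ`, and
`ρ* - |0⟩⟨0| ⊗ ρ*_B = Pρ*Q + Qρ*P + Qρ*Q - E`.
The trace norm of a Hermitian matrix is the largest value of `Re Tr(S X)` over Hermitian
contractions `S = V diag(s) Vᴴ`; against such an `S` the two positive terms contribute at most
`δ` each and, by Cauchy–Schwarz for the inner product `⟨X, Y⟩ = Tr(Y ρ* Xᴴ)`, the two cross
terms at most `√δ` each. Hence the trace distance is at most `√δ + δ ≤ 2√δ ≤ 2√(rε)`, using
`r ≥ 1`.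
-/

open Matrix
open scoped Kronecker ComplexOrder

/-- The square root of a positive semidefinite matrix (Mathlib's former `Matrix.PosSemidef.sqrt`). -/
noncomputable def Matrix.PosSemidef.sqrt {n : Type*} [Fintype n] [DecidableEq n]
    {A : Matrix n n ℂ} (hA : A.PosSemidef) : Matrix n n ℂ :=
  hA.1.eigenvectorUnitary.1 * diagonal ((↑) ∘ (√·) ∘ hA.1.eigenvalues) *
    (star hA.1.eigenvectorUnitary : Matrix n n ℂ)

/-- The trace norm `‖A‖₁ = Tr √(Aᴴ A)`. -/
noncomputable def traceNorm {n : Type*} [Fintype n] [DecidableEq n]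
    (A : Matrix n n ℂ) : ℝ :=
  ((Matrix.posSemidef_conjTranspose_mul_self A).sqrt).trace.re

/-- The trace distance `T(ρ,σ) = ‖ρ - σ‖₁ / 2`. -/
noncomputable def traceDist {n : Type*} [Fintype n] [DecidableEq n]
    (ρ σ : Matrix n n ℂ) : ℝ :=
  traceNorm (ρ - σ) / 2

/-- Partial trace over system `A` of a matrix on the bipartite system `A ⊗ B`. -/
noncomputable def ptraceA {a b : ℕ} (M : Matrix (Fin a × Fin b) (Fin a × Fin b) ℂ) :
    Matrix (Fin b) (Fin b) ℂ :=
  Matrix.of fun i j => ∑ k : Fin a, M (k, i) (k, j)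

namespace Matrix

section Generic

variable {m n R : Type*} [Fintype n]

lemma one_le_rank_of_ne_zero [DecidableEq n] [Field R] {M : Matrix m n R} (hM : M ≠ 0) :
    1 ≤ M.rank := by
  rw [Nat.one_le_iff_ne_zero]
  intro h
  have : M.mulVecLin = 0 := LinearMap.range_eq_bot.mp (Submodule.finrank_eq_zero.mp h)
  exact hM (toLin'.injective (by rw [map_zero]; exact this))

lemma trace_mul_mul_of_isIdempotentElem [CommSemiring R] {P : Matrix n n R}
    (hP : IsIdempotentElem P) (A : Matrix n n R) : (P * A * P).trace = (A * P).trace := by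
  rw [trace_mul_cycle, hP.eq, trace_mul_comm]

lemma trace_mul_add_trace_one_sub_mul_mul_one_sub [DecidableEq n] [CommRing R]
    {P : Matrix n n R} (hP : IsIdempotentElem P) (A : Matrix n n R) :
    (A * P).trace + ((1 - P) * A * (1 - P)).trace = A.trace := by
  rw [trace_mul_mul_of_isIdempotentElem hP.one_sub, Matrix.mul_sub, Matrix.mul_one, trace_sub,
    add_sub_cancel]

lemma isStarProjection_single_self [DecidableEq n] [Semiring R] [StarRing R] (i : n) :
    IsStarProjection (single i i (1 : R)) where
  isIdempotentElem := by rw [IsIdempotentElem, single_mul_single_same, one_mul]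
  isSelfAdjoint := by rw [IsSelfAdjoint, star_eq_conjTranspose, conjTranspose_single, star_one]

lemma IsStarProjection.kronecker [Fintype m] [CommSemiring R] [StarRing R] {p : Matrix m m R}
    {q : Matrix n n R} (hp : IsStarProjection p) (hq : IsStarProjection q) :
    IsStarProjection (p ⊗ₖ q) where
  isIdempotentElem := by
    rw [IsIdempotentElem, ← mul_kronecker_mul, hp.isIdempotentElem.eq, hq.isIdempotentElem.eq]
  isSelfAdjoint := by
    rw [IsSelfAdjoint, star_eq_conjTranspose, conjTranspose_kronecker, ← star_eq_conjTranspose,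
      ← star_eq_conjTranspose, hp.isSelfAdjoint.star_eq, hq.isSelfAdjoint.star_eq]

end Generic

variable {n : Type*} [Fintype n]

lemma PosSemidef.norm_trace_mul_mul_conjTranspose_le {M : Matrix n n ℂ} (hM : M.PosSemidef)
    (X Y : Matrix n n ℂ) :
    ‖(Y * M * Xᴴ).trace‖ ≤ √(X * M * Xᴴ).trace.re * √(Y * M * Yᴴ).trace.re := by
  let := M.toMatrixSeminormedAddCommGroup hM
  let := M.toMatrixInnerProductSpace hM
  exact norm_inner_le_norm (𝕜 := ℂ) X Y

variable [DecidableEq n]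

open scoped MatrixOrder in
lemma PosSemidef.sqrt_eq_of_mul_self_eq {A B : Matrix n n ℂ} (hA : A.PosSemidef)
    (hB : B.PosSemidef) (h : B * B = A) : hA.sqrt = B := by
  rw [← CFC.sqrt_unique h hB.nonneg, CFC.sqrt_eq_real_sqrt A hA.nonneg, cfcₙ_eq_cfc,
    hA.1.cfc_eq]
  rfl

lemma re_trace_mul_le_of_isStarProjection {ρ P : Matrix n n ℂ} (hρ : ρ.PosSemidef)
    (hP : IsStarProjection P) : (ρ * P).trace.re ≤ ρ.trace.re := by
  have hQρQ := hρ.mul_mul_conjTranspose_same (1 - P)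
  rw [← star_eq_conjTranspose, hP.one_sub.isSelfAdjoint.star_eq] at hQρQ
  rw [← trace_mul_add_trace_one_sub_mul_mul_one_sub hP.isIdempotentElem ρ, Complex.add_re]
  linarith [(Complex.nonneg_iff.mp hQρQ.trace_nonneg).1]

noncomputable def conjDiagonal (V : Matrix n n ℂ) (s : n → ℝ) : Matrix n n ℂ :=
  V * diagonal (fun i => (s i : ℂ)) * Vᴴ

variable {V : Matrix n n ℂ}

lemma conjDiagonal_conjTranspose (V : Matrix n n ℂ) (s : n → ℝ) :
    (conjDiagonal V s)ᴴ = conjDiagonal V s := by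
  simp [conjDiagonal, Matrix.mul_assoc, Pi.star_def]

lemma conjDiagonal_mul_conjDiagonal (hV : V ∈ unitaryGroup n ℂ) (s t : n → ℝ) :
    conjDiagonal V s * conjDiagonal V t = conjDiagonal V (s * t) := by
  have hVV : Vᴴ * V = 1 := mem_unitaryGroup_iff'.mp hV
  calc conjDiagonal V s * conjDiagonal V t
      = V * diagonal (fun i => (s i : ℂ)) * (Vᴴ * V) * diagonal (fun i => (t i : ℂ)) * Vᴴ := by
        simp only [conjDiagonal, Matrix.mul_assoc]
    _ = conjDiagonal V (s * t) := by
        simp [hVV, conjDiagonal, Matrix.mul_assoc]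

lemma trace_conjDiagonal (hV : V ∈ unitaryGroup n ℂ) (s : n → ℝ) :
    (conjDiagonal V s).trace = ∑ i, (s i : ℂ) := by
  have hVV : Vᴴ * V = 1 := mem_unitaryGroup_iff'.mp hV
  rw [conjDiagonal, trace_mul_cycle, hVV, Matrix.one_mul, trace_diagonal]

lemma IsHermitian.eq_conjDiagonal {H : Matrix n n ℂ} (hH : H.IsHermitian) :
    H = conjDiagonal (hH.eigenvectorUnitary : Matrix n n ℂ) hH.eigenvalues := by
  conv_lhs => rw [hH.spectral_theorem, Unitary.conjStarAlgAut_apply]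
  rfl

lemma traceNorm_conjDiagonal (hV : V ∈ unitaryGroup n ℂ) (s : n → ℝ) :
    traceNorm (conjDiagonal V s) = ∑ i, |s i| := by
  have habs : (conjDiagonal V s)ᴴ * conjDiagonal V s
      = conjDiagonal V (fun i => |s i|) * conjDiagonal V (fun i => |s i|) := by
    simp only [conjDiagonal_conjTranspose, conjDiagonal_mul_conjDiagonal hV, Pi.mul_def,
      abs_mul_abs_self]
  have hpsd : (conjDiagonal V (fun i => |s i|)).PosSemidef :=
    (posSemidef_diagonal_iff.mpr fun i => by simp).mul_mul_conjTranspose_same V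
  rw [traceNorm, PosSemidef.sqrt_eq_of_mul_self_eq _ hpsd habs.symm, trace_conjDiagonal hV]
  simp [← Complex.ofReal_sum]

lemma abs_re_trace_conjDiagonal_mul_le (hV : V ∈ unitaryGroup n ℂ) {s : n → ℝ}
    (hs : ∀ i, |s i| ≤ 1) {X : Matrix n n ℂ} (hX : X.PosSemidef) :
    |(conjDiagonal V s * X).trace.re| ≤ X.trace.re := by
  set Y := Vᴴ * X * V
  have hY : Y.PosSemidef := by simpa using hX.mul_mul_conjTranspose_same Vᴴ
  have hYX : Y.trace = X.trace := by
    have hVV : V * Vᴴ = 1 := mem_unitaryGroup_iff.mp hV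
    rw [trace_mul_cycle, hVV, Matrix.one_mul]
  have hSY : (conjDiagonal V s * X).trace = (diagonal (fun i => (s i : ℂ)) * Y).trace := by
    rw [conjDiagonal, trace_mul_comm, ← Matrix.mul_assoc, trace_mul_cycle, ← Matrix.mul_assoc,
      trace_mul_comm]
  have hYdiag (i : n) : 0 ≤ (Y i i).re := (Complex.nonneg_iff.mp hY.diag_nonneg).1
  rw [hSY, ← hYX, trace, trace, Complex.re_sum, Complex.re_sum]
  refine (Finset.abs_sum_le_sum_abs _ _).trans (Finset.sum_le_sum fun i _ => ?_)
  simp only [diag_apply, diagonal_mul, Complex.re_ofReal_mul, abs_mul, abs_of_nonneg (hYdiag i)]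
  exact mul_le_of_le_one_left (hYdiag i) (hs i)

lemma traceNorm_le_of_forall_re_trace_conjDiagonal_mul_le {H : Matrix n n ℂ}
    (hH : H.IsHermitian) {c : ℝ}
    (h : ∀ V ∈ unitaryGroup n ℂ, ∀ s : n → ℝ, (∀ i, |s i| ≤ 1) →
      (conjDiagonal V s * H).trace.re ≤ c) :
    traceNorm H ≤ c := by
  set V : Matrix n n ℂ := (hH.eigenvectorUnitary : Matrix n n ℂ)
  have hV : V ∈ unitaryGroup n ℂ := hH.eigenvectorUnitary.2
  set s : n → ℝ := fun i => SignType.sign (hH.eigenvalues i)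
  have hs (i : n) : |s i| ≤ 1 := by
    simp only [s]; cases SignType.sign (hH.eigenvalues i) <;> simp
  have key : (conjDiagonal V s * H).trace.re = traceNorm H := by
    rw [hH.eq_conjDiagonal, traceNorm_conjDiagonal hV, conjDiagonal_mul_conjDiagonal hV,
      trace_conjDiagonal hV]
    simp [s, Pi.mul_apply, sign_mul_self, ← Complex.ofReal_sum]
  exact key ▸ h V hV s hs

lemma re_trace_conjDiagonal_mul_mul_conjTranspose_le (hV : V ∈ unitaryGroup n ℂ) {s : n → ℝ}
    (hs : ∀ i, |s i| ≤ 1) {X : Matrix n n ℂ} (hX : X.PosSemidef) :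
    (conjDiagonal V s * X * (conjDiagonal V s)ᴴ).trace.re ≤ X.trace.re := by
  have hs2 (i : n) : |(s * s) i| ≤ 1 := by
    rw [Pi.mul_apply, abs_mul]; exact mul_le_one₀ (hs i) (abs_nonneg _) (hs i)
  rw [trace_mul_cycle, conjDiagonal_conjTranspose, conjDiagonal_mul_conjDiagonal hV]
  exact (le_abs_self _).trans (abs_re_trace_conjDiagonal_mul_le hV hs2 hX)

lemma abs_re_trace_conjDiagonal_mul_le_sqrt_mul_sqrt (hV : V ∈ unitaryGroup n ℂ)
    {s : n → ℝ} (hs : ∀ i, |s i| ≤ 1) {M : Matrix n n ℂ} (hM : M.PosSemidef)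
    (X Y : Matrix n n ℂ) :
    |(conjDiagonal V s * (X * M * Yᴴ)).trace.re|
      ≤ √(X * M * Xᴴ).trace.re * √(Y * M * Yᴴ).trace.re := by
  set S := conjDiagonal V s
  calc |(S * (X * M * Yᴴ)).trace.re|
      ≤ ‖(S * X * M * Yᴴ).trace‖ := by
        rw [← Matrix.mul_assoc, ← Matrix.mul_assoc]; exact Complex.abs_re_le_norm _
    _ ≤ √(Y * M * Yᴴ).trace.re * √(S * X * M * (S * X)ᴴ).trace.re :=
        hM.norm_trace_mul_mul_conjTranspose_le Y (S * X)
    _ ≤ √(X * M * Xᴴ).trace.re * √(Y * M * Yᴴ).trace.re := by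
        rw [mul_comm]
        refine mul_le_mul_of_nonneg_right (Real.sqrt_le_sqrt ?_) (Real.sqrt_nonneg _)
        have := re_trace_conjDiagonal_mul_mul_conjTranspose_le hV hs
          (hM.mul_mul_conjTranspose_same X)
        simpa only [conjTranspose_mul, Matrix.mul_assoc] using this

theorem traceNorm_sub_le_of_posSemidef_sub_compression {ρ σ P : Matrix n n ℂ}
    (hρ : ρ.PosSemidef) (hρ1 : ρ.trace = 1) (hσ1 : σ.trace = 1) (hP : IsStarProjection P)
    (hσP : (σ - P * ρ * P).PosSemidef) :
    traceNorm (ρ - σ) ≤ 4 * √(1 - (ρ * P).trace.re) := by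
  have hPH : Pᴴ = P := hP.isSelfAdjoint.star_eq
  have hQH : (1 - P)ᴴ = 1 - P := hP.one_sub.isSelfAdjoint.star_eq
  have hPρP : (P * ρ * P).PosSemidef := by
    have := hρ.mul_mul_conjTranspose_same P; rwa [hPH] at this
  have hQρQ : ((1 - P) * ρ * (1 - P)).PosSemidef := by
    have := hρ.mul_mul_conjTranspose_same (1 - P); rwa [hQH] at this
  set t := (ρ * P).trace.re
  set δ := ((1 - P) * ρ * (1 - P)).trace.re
  have hδ : 0 ≤ δ := (Complex.nonneg_iff.mp hQρQ.trace_nonneg).1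
  have hPt : (P * ρ * P).trace.re = t := by
    rw [trace_mul_mul_of_isIdempotentElem hP.isIdempotentElem]
  have htδ : t + δ = 1 := by
    rw [← Complex.add_re, trace_mul_add_trace_one_sub_mul_mul_one_sub hP.isIdempotentElem, hρ1,
      Complex.one_re]
  have ht : 0 ≤ t := hPt ▸ (Complex.nonneg_iff.mp hPρP.trace_nonneg).1
  have hE : (σ - P * ρ * P).trace.re = δ := by
    rw [trace_sub, hσ1, Complex.sub_re, Complex.one_re, hPt]; linarith
  have hdecomp : ρ - σ = P * ρ * (1 - P) + (1 - P) * ρ * P + (1 - P) * ρ * (1 - P)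
      - (σ - P * ρ * P) := by
    noncomm_ring
  have hσH : σ.IsHermitian := by simpa using hσP.isHermitian.add hPρP.isHermitian
  rw [show 1 - t = δ by linarith]
  refine traceNorm_le_of_forall_re_trace_conjDiagonal_mul_le (hρ.isHermitian.sub hσH)
    fun V hV s hs => ?_
  have hPQ := abs_re_trace_conjDiagonal_mul_le_sqrt_mul_sqrt hV hs hρ P (1 - P)
  have hQP := abs_re_trace_conjDiagonal_mul_le_sqrt_mul_sqrt hV hs hρ (1 - P) P
  rw [hPH, hQH, hPt] at hPQ hQP
  have hQQ := abs_re_trace_conjDiagonal_mul_le hV hs hQρQ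
  have hEE := abs_re_trace_conjDiagonal_mul_le hV hs hσP
  have hsqrt_t : √t ≤ 1 := Real.sqrt_le_one.mpr (by linarith)
  have hcross : √t * √δ ≤ √δ := mul_le_of_le_one_left (Real.sqrt_nonneg δ) hsqrt_t
  have hδ_sqrt : δ ≤ √δ := Real.le_sqrt_of_sq_le (by nlinarith)
  rw [hdecomp, Matrix.mul_sub, Matrix.mul_add, Matrix.mul_add, trace_sub, trace_add, trace_add]
  simp only [Complex.sub_re, Complex.add_re]
  linarith [abs_le.mp hPQ, abs_le.mp hQP, abs_le.mp hQQ, abs_le.mp hEE]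

end Matrix

section PartialTrace

variable {a b : ℕ}

lemma trace_ptraceA (M : Matrix (Fin a × Fin b) (Fin a × Fin b) ℂ) :
    (ptraceA M).trace = M.trace := by
  rw [trace, trace, Fintype.sum_prod_type, Finset.sum_comm]
  rfl

lemma single_kronecker_ptraceA_eq_sum (i : Fin a)
    (M : Matrix (Fin a × Fin b) (Fin a × Fin b) ℂ) :
    single i i 1 ⊗ₖ ptraceA M
      = ∑ k : Fin a, (single i k 1 ⊗ₖ (1 : Matrix (Fin b) (Fin b) ℂ)) * M *
          (single i k 1 ⊗ₖ (1 : Matrix (Fin b) (Fin b) ℂ))ᴴ := by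
  ext ⟨k, x⟩ ⟨l, y⟩
  rw [Matrix.sum_apply]
  simp only [Matrix.mul_apply, Matrix.conjTranspose_apply, Matrix.kroneckerMap_apply,
    Matrix.single, Matrix.one_apply, Matrix.of_apply, ptraceA, Fintype.sum_prod_type]
  simp [Finset.sum_ite_eq, ite_and, apply_ite star, mul_comm, Finset.mul_sum]

lemma posSemidef_single_kronecker_ptraceA_sub {ρ : Matrix (Fin a × Fin b) (Fin a × Fin b) ℂ}
    (hρ : ρ.PosSemidef) (i : Fin a) :
    (single i i 1 ⊗ₖ ptraceA ρ - (single i i 1 ⊗ₖ 1) * ρ * (single i i 1 ⊗ₖ 1)).PosSemidef := by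
  have hP : (single i i (1 : ℂ) ⊗ₖ (1 : Matrix (Fin b) (Fin b) ℂ))ᴴ = single i i 1 ⊗ₖ 1 :=
    ((isStarProjection_single_self i).kronecker (IsStarProjection.one _)).isSelfAdjoint.star_eq
  rw [single_kronecker_ptraceA_eq_sum, ← Finset.add_sum_erase _ _ (Finset.mem_univ i), hP,
    add_sub_cancel_left]
  exact posSemidef_sum _ fun k _ => hρ.mul_mul_conjTranspose_same _

theorem traceDist_single_kronecker_ptraceA_le {ρ : Matrix (Fin a × Fin b) (Fin a × Fin b) ℂ}
    (hρ : ρ.PosSemidef) (hρ1 : ρ.trace = 1) (i : Fin a) :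
    traceDist ρ (single i i 1 ⊗ₖ ptraceA ρ)
      ≤ 2 * √(1 - (ρ * (single i i 1 ⊗ₖ (1 : Matrix (Fin b) (Fin b) ℂ))).trace.re) := by
  have hσ1 : (single i i (1 : ℂ) ⊗ₖ ptraceA ρ).trace = 1 := by
    rw [trace_kronecker, trace_single_eq_same, trace_ptraceA, hρ1, one_mul]
  have := traceNorm_sub_le_of_posSemidef_sub_compression hρ hρ1 hσ1
    ((isStarProjection_single_self i).kronecker (IsStarProjection.one _))
    (posSemidef_single_kronecker_ptraceA_sub hρ i)
  rw [traceDist]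
  linarith

end PartialTrace

theorem traceDist_le_of_approx_disentangling {a b : ℕ} [NeZero a]
    (ρ : Matrix (Fin a × Fin b) (Fin a × Fin b) ℂ)
    (hρ : ρ.PosSemidef) (hρ1 : ρ.trace = 1)
    (U : Matrix (Fin a × Fin b) (Fin a × Fin b) ℂ)
    (hU : U ∈ Matrix.unitaryGroup (Fin a × Fin b) ℂ)
    (ε : ℝ)
    (hdis : 1 - ε ≤ (((U * ρ * Uᴴ) *
      ((Matrix.single (0 : Fin a) (0 : Fin a) (1 : ℂ)) ⊗ₖ
        (1 : Matrix (Fin b) (Fin b) ℂ))).trace).re) :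
    traceDist (U * ρ * Uᴴ)
      ((Matrix.single (0 : Fin a) (0 : Fin a) (1 : ℂ)) ⊗ₖ ptraceA (U * ρ * Uᴴ))
      ≤ 2 * Real.sqrt ((ρ.rank : ℝ) * ε) := by
  have hρ' : (U * ρ * Uᴴ).PosSemidef := hρ.mul_mul_conjTranspose_same U
  have hρ'1 : (U * ρ * Uᴴ).trace = 1 := by
    have hUU : Uᴴ * U = 1 := mem_unitaryGroup_iff'.mp hU
    rw [trace_mul_cycle, hUU, Matrix.one_mul, hρ1]
  have hP := (isStarProjection_single_self (0 : Fin a)).kronecker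
    (IsStarProjection.one (Matrix (Fin b) (Fin b) ℂ))
  have hle_one : ((U * ρ * Uᴴ) * (single 0 0 1 ⊗ₖ 1)).trace.re ≤ 1 := by
    simpa [hρ'1] using re_trace_mul_le_of_isStarProjection hρ' hP
  have hrank : (1 : ℝ) ≤ ρ.rank := by
    exact_mod_cast one_le_rank_of_ne_zero (by rintro rfl; simp at hρ1)
  calc _ ≤ _ := traceDist_single_kronecker_ptraceA_le hρ' hρ'1 0
    _ ≤ 2 * √(ρ.rank * ε) := by gcongr; nlinarith
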